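/- arXiv:1803.10266 — 2 statements merged into one kernel-verified Lean document; each statement's English description precedes it below -/
import Mathlib

section
/- Let y : [ℓ] → {0,1} be an alternating sequence (y_{j+1} ≠ y_j for all j < ℓ) and let f : [ℓ] → {0,1} be any function that is constant on each of k+1 consecutive blocks partitioning [ℓ]. Then Σ_{j∈[ℓ]} |f(j) − y(j)| ≥ (ℓ − k − 1)/2. -/
/-!
Call a step `i → i + 1` flat when the block map `b` does not change there. A monotone map into
`Fin (k + 1)` changes at most `k` times, so at least `ℓ - 1 - k` of the `ℓ - 1` steps are flat. On a
flat step `f` takes one value while the alternating `y` takes both, so `f` errs at `i` or at `i + 1`.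
Each index lies in at most two steps, hence twice the number of errors bounds the number of flat
steps.
-/

open Finset

namespace Fin

theorem sum_succ_sub_castSucc {G : Type*} [AddCommGroup G] {n : ℕ} (g : Fin (n + 1) → G) :
    ∑ i : Fin n, (g i.succ - g i.castSucc) = g (last n) - g 0 := by
  rw [sum_sub_distrib, sub_eq_sub_iff_add_eq_add, add_comm _ (g 0), ← sum_univ_succ,
    add_comm (g _), ← sum_univ_castSucc]

theorem card_filter_castSucc_ne_succ_le {n : ℕ} (b : Fin (n + 1) → ℕ) (hb : Monotone b) :
    #{i : Fin n | b i.castSucc ≠ b i.succ} ≤ b (last n) - b 0 := by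
  have hle : b 0 ≤ b (last n) := hb (zero_le _)
  suffices (#{i : Fin n | b i.castSucc ≠ b i.succ} : ℤ) ≤ b (last n) - b 0 by omega
  rw [card_filter, Nat.cast_sum, ← sum_succ_sub_castSucc (fun j => (b j : ℤ))]
  refine sum_le_sum fun i _ => ?_
  have hstep : b i.castSucc ≤ b i.succ := hb (castSucc_le_succ i)
  split_ifs with hjump <;> push_cast <;> omega

theorem sum_castSucc_add_succ_le_two_nsmul_sum {M : Type*} [AddCommMonoid M] [PartialOrder M]
    [IsOrderedAddMonoid M] {n : ℕ} (e : Fin (n + 1) → M) (he : 0 ≤ e) (s : Finset (Fin n)) :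
    ∑ i ∈ s, (e i.castSucc + e i.succ) ≤ 2 • ∑ j, e j := by
  have hsub (g : Fin n → Fin (n + 1)) : ∑ i ∈ s, e (g i) ≤ ∑ i, e (g i) :=
    sum_le_sum_of_subset_of_nonneg (subset_univ s) fun i _ _ => he _
  rw [sum_add_distrib, two_nsmul]
  gcongr
  · calc ∑ i ∈ s, e (castSucc i) ≤ ∑ i, e (castSucc i) := hsub _
      _ ≤ ∑ j, e j := by rw [sum_univ_castSucc e]; exact le_add_of_nonneg_right (he _)
  · calc ∑ i ∈ s, e (succ i) ≤ ∑ i, e (succ i) := hsub _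
      _ ≤ ∑ j, e j := by rw [sum_univ_succ e]; exact le_add_of_nonneg_left (he _)

end Fin

theorem one_le_abs_sub_add_abs_sub {a y y' : ℝ} (hy : y = 0 ∨ y = 1) (hy' : y' = 0 ∨ y' = 1)
    (hne : y' ≠ y) : 1 ≤ |a - y| + |a - y'| := by
  have hdist : |y - y'| = 1 := by
    rcases hy with rfl | rfl <;> rcases hy' with rfl | rfl <;> norm_num at *
  calc 1 = |y - y'| := hdist.symm
    _ ≤ |y - a| + |a - y'| := abs_sub_le y a y'
    _ = |a - y| + |a - y'| := by rw [abs_sub_comm y a]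

theorem card_le_two_mul_sum_abs_sub {n : ℕ} (y f : Fin (n + 1) → ℝ)
    (hy01 : ∀ j, y j = 0 ∨ y j = 1) (halt : ∀ i : Fin n, y i.succ ≠ y i.castSucc)
    (s : Finset (Fin n)) (hs : ∀ i ∈ s, f i.castSucc = f i.succ) :
    (#s : ℝ) ≤ 2 * ∑ j, |f j - y j| := by
  calc (#s : ℝ) = ∑ _i ∈ s, (1 : ℝ) := by simp
    _ ≤ ∑ i ∈ s, (|f i.castSucc - y i.castSucc| + |f i.succ - y i.succ|) := by
      refine sum_le_sum fun i hi => ?_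
      rw [← hs i hi]
      exact one_le_abs_sub_add_abs_sub (hy01 _) (hy01 _) (halt i)
    _ ≤ 2 • ∑ j, |f j - y j| :=
      Fin.sum_castSucc_add_succ_le_two_nsmul_sum (fun j => |f j - y j|) (fun _ => abs_nonneg _) s
    _ = 2 * ∑ j, |f j - y j| := nsmul_eq_mul _ _

theorem stmt_11_general (l k : ℕ) (y f : Fin l → ℝ)
    (hy01 : ∀ j, y j = 0 ∨ y j = 1)
    (halt : ∀ j : ℕ, ∀ h : j + 1 < l, y ⟨j + 1, h⟩ ≠ y ⟨j, Nat.lt_of_succ_lt h⟩)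
    (b : Fin l → Fin (k + 1)) (hb : Monotone b)
    (hconst : ∀ j j', b j = b j' → f j = f j') :
    ((l : ℝ) - k - 1) / 2 ≤ ∑ j, |f j - y j| := by
  cases l with
  | zero =>
    rw [univ_eq_empty, sum_empty, Nat.cast_zero]
    linarith [k.cast_nonneg (α := ℝ)]
  | succ n =>
    have hjumps : #{i : Fin n | ¬b i.castSucc = b i.succ} ≤ k := by
      have := Fin.card_filter_castSucc_ne_succ_le (fun j => (b j : ℕ)) fun _ _ h => hb h
      simp only [ne_eq, Fin.val_inj] at this
      have := (b (Fin.last n)).isLt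
      omega
    have hsplit : #{i : Fin n | b i.castSucc = b i.succ} + #{i : Fin n | ¬b i.castSucc = b i.succ}
        = n := by
      rw [card_filter_add_card_filter_not, card_univ, Fintype.card_fin]
    have hflat : (n : ℝ) ≤ #{i : Fin n | b i.castSucc = b i.succ} + k := by
      exact_mod_cast (by omega : n ≤ #{i : Fin n | b i.castSucc = b i.succ} + k)
    have herr := card_le_two_mul_sum_abs_sub y f hy01 (fun i => halt i (Nat.succ_lt_succ i.2))
      {i : Fin n | b i.castSucc = b i.succ} fun i hi => hconst _ _ (mem_filter.1 hi).2
    push_cast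
    linarith

theorem stmt_11 (l k : ℕ) (y f : Fin l → ℝ)
    (hy01 : ∀ j, y j = 0 ∨ y j = 1) (hf01 : ∀ j, f j = 0 ∨ f j = 1)
    (halt : ∀ j : ℕ, ∀ h : j + 1 < l, y ⟨j + 1, h⟩ ≠ y ⟨j, Nat.lt_of_succ_lt h⟩)
    (b : Fin l → Fin (k + 1)) (hb : Monotone b)
    (hconst : ∀ j j', b j = b j' → f j = f j') :
    ((l : ℝ) - k - 1) / 2 ≤ ∑ j, |f j - y j| :=
  stmt_11_general l k y f hy01 halt b hb hconst
end

section
/- Let M : Z^n × Z → [0,B] be such that for every z∈Z and datasets S, S' differing in one element, the max-divergence D_∞(M(S,z)‖M(S',z)) ≤ ε (i.e., M is an ε-differentially private evaluation algorithm with δ=0). Let P be any distribution over Z and k ≥ 1 an integer. Then E_{S,S'∼P^n}[ ( (1/n)·Σ_i E_M[M(S,z'_i)] )^k ] ≤ e^{k²ε} · E_{S∼P^n}[ ( (1/n)·Σ_i E_M[M(S,z_i)] )^k ]. -/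
open MeasureTheory

/-- Two datasets are neighbors if they differ in at most one element. -/
def Neighbors {Z : Type*} {n : ℕ} (S S' : Fin n → Z) : Prop :=
  ∃ j, ∀ i, i ≠ j → S i = S' i

/-!
Expand the `k`-th power of the off-sample average into a sum over index tuples `I : Fin k → Fin n`.
For a fixed `I`, let `T` be the set of indices occurring in `I` and swap the primed points at `T`
into `S`. Group privacy over the at most `k` changed entries costs a factor `e^{kε}` per factor of
the product, hence `e^{k²ε}` in all, and after the swap the sample together with the evaluation
points `S' (I j)` has the law of `S` together with its own points `S (I j)`.
-/

open Finset
open scoped ENNReal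

theorem le_pow_card_smul_of_eqOn_compl {Z α : Type*} [MeasurableSpace α] {n : ℕ}
    {A : (Fin n → Z) → Measure α} {c : ℝ≥0∞}
    (hA : ∀ S S', Neighbors S S' → A S ≤ c • A S') (T : Finset (Fin n)) :
    ∀ {S S' : Fin n → Z}, (∀ i ∉ T, S i = S' i) → A S ≤ c ^ #T • A S' := by
  classical
  induction T using Finset.induction_on with
  | empty => intro S S' h; simp [funext fun i => h i (Finset.notMem_empty i)]
  | insert a T ha ih =>
    intro S S' h
    set S'' := Function.update S a (S' a)
    have hnb : Neighbors S S'' := ⟨a, fun i hi => (Function.update_of_ne hi _ _).symm⟩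
    have hrest : ∀ i ∉ T, S'' i = S' i := by
      intro i hi
      rcases eq_or_ne i a with rfl | hia
      · simp [S'']
      · rw [show S'' i = S i from Function.update_of_ne hia _ _]; exact h i (by simp [hia, hi])
    calc A S ≤ c • A S'' := hA _ _ hnb
      _ ≤ c • c ^ #T • A S' := by gcongr; exact ih hrest
      _ = c ^ #(insert a T) • A S' := by rw [card_insert_of_notMem ha, smul_smul, pow_succ']

theorem integral_le_toReal_mul_of_le_smul {α : Type*} [MeasurableSpace α] {μ ν : Measure α}
    {f : α → ℝ} {c : ℝ≥0∞} (hc : c ≠ ∞) (hle : μ ≤ c • ν) (hf : 0 ≤ᵐ[ν] f)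
    (hfi : Integrable f ν) : ∫ x, f x ∂μ ≤ c.toReal * ∫ x, f x ∂ν := by
  calc ∫ x, f x ∂μ ≤ ∫ x, f x ∂(c • ν) :=
        integral_mono_measure hle (Measure.ae_smul_measure hf c) (hfi.smul_measure hc)
    _ = c.toReal * ∫ x, f x ∂ν := integral_smul_measure f c

theorem integral_id_mem_Icc {μ : Measure ℝ} [IsProbabilityMeasure μ] {a b : ℝ}
    (h : μ (Set.Icc a b)ᶜ = 0) : ∫ w, w ∂μ ∈ Set.Icc a b :=
  (convex_Icc a b).integral_mem isClosed_Icc (mem_ae_iff.mpr h)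
    (Integrable.of_mem_Icc a b aemeasurable_id (mem_ae_iff.mpr h))

theorem integral_id_le_pow_mul_of_eqOn_compl {Z : Type*} {n k : ℕ} {B c : ℝ} (hc : 1 ≤ c)
    {M : (Fin n → Z) → Measure ℝ} [∀ S, IsFiniteMeasure (M S)]
    (hrange : ∀ S, M S (Set.Icc 0 B)ᶜ = 0)
    (hdp : ∀ S S', Neighbors S S' → M S ≤ ENNReal.ofReal c • M S')
    {T : Finset (Fin n)} (hT : #T ≤ k) {S S' : Fin n → Z} (hSS' : ∀ i ∉ T, S i = S' i) :
    ∫ w, w ∂(M S) ≤ c ^ k * ∫ w, w ∂(M S') := by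
  have hae : ∀ᵐ w ∂(M S'), w ∈ Set.Icc 0 B := mem_ae_iff.mpr (hrange S')
  have hmean := integral_le_toReal_mul_of_le_smul (by finiteness)
    (le_pow_card_smul_of_eqOn_compl hdp T hSS') (hae.mono fun _ hw => hw.1)
    (Integrable.of_mem_Icc 0 B aemeasurable_id hae)
  rw [ENNReal.toReal_pow, ENNReal.toReal_ofReal (by linarith)] at hmean
  calc ∫ w, w ∂(M S) ≤ c ^ #T * ∫ w, w ∂(M S') := hmean
    _ ≤ c ^ k * ∫ w, w ∂(M S') := by
        gcongr
        exact integral_nonneg_of_ae (hae.mono fun _ hw => hw.1)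

theorem measurePreserving_piecewise {ι α : Type*} [Fintype ι] [DecidableEq ι] [MeasurableSpace α]
    (μ : ι → Measure α) [∀ i, IsProbabilityMeasure (μ i)] (T : Finset ι) :
    MeasurePreserving (fun p : (ι → α) × (ι → α) => T.piecewise p.2 p.1)
      ((Measure.pi μ).prod (Measure.pi μ)) (Measure.pi μ) := by
  have hcoord : ∀ i, MeasurePreserving (fun q : α × α => if i ∈ T then q.2 else q.1)
      ((μ i).prod (μ i)) (μ i) := by
    intro i
    split_ifs
    · exact measurePreserving_snd
    · exact measurePreserving_fst
  exact (measurePreserving_pi _ _ hcoord).comp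
    (measurePreserving_arrowProdEquivProdArrow α α ι μ μ).symm

theorem integral_mul_sum_pow_eq {α : Type*} [MeasurableSpace α] {μ : Measure α} {n k : ℕ}
    {f : Fin n → α → ℝ} (c : ℝ)
    (hf : ∀ I : Fin k → Fin n, Integrable (fun x => ∏ j, f (I j) x) μ) :
    ∫ x, (c * ∑ i, f i x) ^ k ∂μ = c ^ k * ∑ I : Fin k → Fin n, ∫ x, ∏ j, f (I j) x ∂μ := by
  simp_rw [mul_pow, sum_pow', Fintype.piFinset_univ]
  rw [integral_const_mul, integral_finsetSum _ fun I _ => hf I]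

theorem integral_mul_sum_pow_le {α β : Type*} [MeasurableSpace α] [MeasurableSpace β]
    {μ : Measure α} {ν : Measure β} {n k : ℕ} {f : Fin n → α → ℝ} {g : Fin n → β → ℝ}
    {c C : ℝ} (hc : 0 ≤ c)
    (hf : ∀ I : Fin k → Fin n, Integrable (fun x => ∏ j, f (I j) x) μ)
    (hg : ∀ I : Fin k → Fin n, Integrable (fun y => ∏ j, g (I j) y) ν)
    (hfg : ∀ I : Fin k → Fin n, ∫ x, ∏ j, f (I j) x ∂μ ≤ C * ∫ y, ∏ j, g (I j) y ∂ν) :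
    ∫ x, (c * ∑ i, f i x) ^ k ∂μ ≤ C * ∫ y, (c * ∑ i, g i y) ^ k ∂ν := by
  rw [integral_mul_sum_pow_eq c hf, integral_mul_sum_pow_eq c hg, mul_left_comm C, mul_sum _ _ C]
  exact mul_le_mul_of_nonneg_left (sum_le_sum fun I _ => hfg I) (pow_nonneg hc k)

section OffSample

variable {Z : Type*} [MeasurableSpace Z] {n k : ℕ} {B C : ℝ} {F : (Fin n → Z) → Z → ℝ}

theorem integrable_prod_comp {α : Type*} [MeasurableSpace α] {ρ : Measure α} [IsFiniteMeasure ρ]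
    (hFm : Measurable fun p : (Fin n → Z) × Z => F p.1 p.2) (hF : ∀ S z, F S z ∈ Set.Icc 0 B)
    {g h : α → Fin n → Z} (hg : Measurable g) (hh : Measurable h) (I : Fin k → Fin n) :
    Integrable (fun x => ∏ j, F (g x) (h x (I j))) ρ := by
  refine Integrable.of_mem_Icc 0 (B ^ k) ?_ (ae_of_all _ fun x => ⟨?_, ?_⟩)
  · exact (Finset.measurable_prod _ fun j _ =>
      hFm.comp (hg.prodMk ((measurable_pi_apply _).comp hh))).aemeasurable
  · exact prod_nonneg fun j _ => (hF _ _).1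
  · calc ∏ j, F (g x) (h x (I j)) ≤ ∏ _j : Fin k, B :=
          prod_le_prod (fun j _ => (hF _ _).1) fun j _ => (hF _ _).2
      _ = B ^ k := by simp

theorem integral_prod_offSample_le (P : Measure Z) [IsProbabilityMeasure P]
    (hFm : Measurable fun p : (Fin n → Z) × Z => F p.1 p.2) (hF : ∀ S z, F S z ∈ Set.Icc 0 B)
    (hpriv : ∀ T : Finset (Fin n), #T ≤ k → ∀ S S' : Fin n → Z, (∀ i ∉ T, S i = S' i) →
      ∀ z, F S z ≤ C * F S' z)
    (I : Fin k → Fin n) :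
    ∫ p, ∏ j, F p.1 (p.2 (I j)) ∂((Measure.pi fun _ => P).prod (Measure.pi fun _ => P)) ≤
      C ^ k * ∫ S, ∏ j, F S (S (I j)) ∂(Measure.pi fun _ => P) := by
  classical
  set T := univ.image I
  set σ := fun p : (Fin n → Z) × (Fin n → Z) => T.piecewise p.2 p.1
  have hσ : MeasurePreserving σ _ _ := measurePreserving_piecewise (fun _ => P) T
  have hσI (p) (j) : σ p (I j) = p.2 (I j) :=
    T.piecewise_eq_of_mem _ _ (mem_image_of_mem I (mem_univ j))
  have hpt (p) : ∏ j, F p.1 (p.2 (I j)) ≤ C ^ k * ∏ j, F (σ p) (σ p (I j)) :=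
    calc ∏ j, F p.1 (p.2 (I j)) ≤ ∏ j, C * F (σ p) (p.2 (I j)) :=
          prod_le_prod (fun j _ => (hF _ _).1) fun j _ =>
            hpriv T (card_image_le.trans (by simp)) _ _
              (fun i hi => (T.piecewise_eq_of_notMem _ _ hi).symm) _
      _ = C ^ k * ∏ j, F (σ p) (σ p (I j)) := by simp [prod_mul_distrib, hσI]
  have hmeas : Measurable fun S : Fin n → Z => ∏ j, F S (S (I j)) :=
    Finset.measurable_prod _ fun j _ => hFm.comp (measurable_id.prodMk (measurable_pi_apply _))
  calc _ ≤ ∫ p, C ^ k * ∏ j, F (σ p) (σ p (I j))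
          ∂((Measure.pi fun _ => P).prod (Measure.pi fun _ => P)) :=
        integral_mono (integrable_prod_comp hFm hF measurable_fst measurable_snd I)
          ((integrable_prod_comp hFm hF hσ.measurable hσ.measurable I).const_mul _) hpt
    _ = C ^ k * ∫ S, ∏ j, F S (S (I j)) ∂(Measure.pi fun _ => P) := by
        have hmap := integral_map (f := fun S => ∏ j, F S (S (I j))) hσ.measurable.aemeasurable
          (by rw [hσ.map_eq]; exact hmeas.aestronglyMeasurable)
        rw [hσ.map_eq] at hmap
        rw [integral_const_mul, hmap]

end OffSample

theorem stmt_15_general {Z : Type*} [MeasurableSpace Z] (n : ℕ) (B ε : ℝ)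
    (hε : 0 ≤ ε) (k : ℕ)
    (M : (Fin n → Z) → Z → Measure ℝ)
    (hprob : ∀ S z, IsProbabilityMeasure (M S z))
    (hrange : ∀ S z, M S z (Set.Icc (0 : ℝ) B)ᶜ = 0)
    (hmeas : Measurable fun p : (Fin n → Z) × Z => ∫ w, w ∂(M p.1 p.2))
    (hdp : ∀ S S' : Fin n → Z, Neighbors S S' → ∀ z, ∀ O : Set ℝ, MeasurableSet O →
      M S z O ≤ ENNReal.ofReal (Real.exp ε) * M S' z O)
    (P : Measure Z) [IsProbabilityMeasure P] :
    ∫ p, ((1 / n : ℝ) * ∑ i, ∫ w, w ∂(M p.1 (p.2 i))) ^ k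
        ∂((Measure.pi fun _ : Fin n => P).prod (Measure.pi fun _ : Fin n => P)) ≤
      Real.exp ((k : ℝ) ^ 2 * ε) *
        ∫ S, ((1 / n : ℝ) * ∑ i, ∫ w, w ∂(M S (S i))) ^ k
          ∂(Measure.pi fun _ : Fin n => P) := by
  have := hprob
  set F : (Fin n → Z) → Z → ℝ := fun S z => ∫ w, w ∂(M S z)
  have hF (S z) : F S z ∈ Set.Icc 0 B := integral_id_mem_Icc (hrange S z)
  have hpriv (T : Finset (Fin n)) (hT : #T ≤ k) (S S' : Fin n → Z) (hSS' : ∀ i ∉ T, S i = S' i)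
      (z : Z) : F S z ≤ Real.exp ε ^ k * F S' z :=
    integral_id_le_pow_mul_of_eqOn_compl (M := fun S => M S z) (Real.one_le_exp hε)
      (fun S => hrange S z) (fun S S' h => Measure.le_iff.2 (hdp S S' h z)) hT hSS'
  have hCk : (Real.exp ε ^ k) ^ k = Real.exp ((k : ℝ) ^ 2 * ε) := by
    rw [← pow_mul, ← Real.exp_nat_mul]; push_cast; ring_nf
  rw [← hCk]
  exact integral_mul_sum_pow_le (by positivity)
    (integrable_prod_comp hmeas hF measurable_fst measurable_snd)
    (integrable_prod_comp hmeas hF measurable_id measurable_id)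
    fun I => integral_prod_offSample_le P hmeas hF hpriv I

theorem stmt_15 {Z : Type*} [MeasurableSpace Z] (n : ℕ) (hn : 0 < n) (B ε : ℝ)
    (hB : 0 ≤ B) (hε : 0 ≤ ε) (k : ℕ) (hk : 1 ≤ k)
    (M : (Fin n → Z) → Z → Measure ℝ)
    (hprob : ∀ S z, IsProbabilityMeasure (M S z))
    (hrange : ∀ S z, M S z (Set.Icc (0 : ℝ) B)ᶜ = 0)
    (hmeas : Measurable fun p : (Fin n → Z) × Z => ∫ w, w ∂(M p.1 p.2))
    (hdp : ∀ S S' : Fin n → Z, Neighbors S S' → ∀ z, ∀ O : Set ℝ, MeasurableSet O →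
      M S z O ≤ ENNReal.ofReal (Real.exp ε) * M S' z O)
    (P : Measure Z) [IsProbabilityMeasure P] :
    ∫ p, ((1 / n : ℝ) * ∑ i, ∫ w, w ∂(M p.1 (p.2 i))) ^ k
        ∂((Measure.pi fun _ : Fin n => P).prod (Measure.pi fun _ : Fin n => P)) ≤
      Real.exp ((k : ℝ) ^ 2 * ε) *
        ∫ S, ((1 / n : ℝ) * ∑ i, ∫ w, w ∂(M S (S i))) ^ k
          ∂(Measure.pi fun _ : Fin n => P) :=
  stmt_15_general n B ε hε k M hprob hrange hmeas hdp P
end
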